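/- The Shannon entropy H_n of the shape distribution of a random BST on n nodes satisfies the recurrence H_0 = H_1 = 0 and H_n = lg n + (1/n) · Σ_{i=1}^{n} (H_{i-1} + H_{n-i}) for n ≥ 2, where lg denotes the base-2 logarithm. -/

import Mathlib

open Filter Real

/-- Binary trees: empty (`leaf`) or a node with left and right subtrees. -/
inductive BinTree where
  | leaf : BinTree
  | node : BinTree → BinTree → BinTree
deriving DecidableEq, Repr

namespace BinTree

/-- Number of nodes. -/
def size : BinTree → ℕ
  | leaf => 0
  | node l r => l.size + r.size + 1

/-- Product of subtree sizes over all nodes: `∏_{v∈t} st(v)`. -/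
def stProd : BinTree → ℕ
  | leaf => 1
  | node l r => (node l r).size * l.stProd * r.stProd

/-- Subtree-size entropy: `H_st(t) = ∑_{v∈t} lg st(v)`. -/
noncomputable def stEntropy : BinTree → ℝ
  | leaf => 0
  | node l r => Real.logb 2 ((node l r).size : ℝ) + l.stEntropy + r.stEntropy

/-- Size of the left subtree of the root. -/
def leftSize : BinTree → ℕ
  | leaf => 0
  | node l _ => l.size

/-- Every node has at most one (nonempty) child. -/
def isPath : BinTree → Prop
  | leaf => True
  | node l r => (l = leaf ∨ r = leaf) ∧ l.isPath ∧ r.isPath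

/-- At every node the sizes of the two subtrees differ by at most 1. -/
def isBalanced : BinTree → Prop
  | leaf => True
  | node l r => ((l.size : ℤ) - (r.size : ℤ)).natAbs ≤ 1 ∧ l.isBalanced ∧ r.isBalanced

/-- Number of leaves (nodes with no children). -/
def leafCount : BinTree → ℕ
  | leaf => 0
  | node l r => (if l = leaf ∧ r = leaf then 1 else 0) + l.leafCount + r.leafCount

/-- Number of binary nodes (both children present). -/
def binCount : BinTree → ℕ
  | leaf => 0
  | node l r => (if l ≠ leaf ∧ r ≠ leaf then 1 else 0) + l.binCount + r.binCount

/-- Number of nodes with only a left child. -/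
def leftOnlyCount : BinTree → ℕ
  | leaf => 0
  | node l r => (if l ≠ leaf ∧ r = leaf then 1 else 0) + l.leftOnlyCount + r.leftOnlyCount

/-- Number of nodes with only a right child. -/
def rightOnlyCount : BinTree → ℕ
  | leaf => 0
  | node l r => (if l = leaf ∧ r ≠ leaf then 1 else 0) + l.rightOnlyCount + r.rightOnlyCount

end BinTree

/-- Cartesian tree construction with explicit fuel (fuel ≥ length suffices). -/
def cartesianAux : ℕ → List ℕ → BinTree
  | 0, _ => .leaf
  | _ + 1, [] => .leaf
  | fuel + 1, x :: xs =>
      let m := List.foldl min x xs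
      let i := (x :: xs).idxOf m
      .node (cartesianAux fuel ((x :: xs).take i)) (cartesianAux fuel ((x :: xs).drop (i + 1)))

/-- The Cartesian tree of a list: root at the (first) minimum, left/right
subtrees built recursively from the prefix/suffix. -/
def cartesian (l : List ℕ) : BinTree := cartesianAux l.length l

/-- The array `A[1..n]` (as a list) associated with a permutation of `Fin n`. -/
def permList {n : ℕ} (p : Equiv.Perm (Fin n)) : List ℕ := List.ofFn fun k => (p k : ℕ)

/-- All binary trees with exactly `n` nodes. -/
def treesOfSize : ℕ → Finset BinTree
  | 0 => {BinTree.leaf}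
  | n + 1 =>
    (Finset.range (n + 1)).attach.biUnion fun i =>
      ((treesOfSize i.1) ×ˢ (treesOfSize (n - i.1))).image fun p => BinTree.node p.1 p.2
termination_by n => n
decreasing_by
  · exact Nat.lt_succ_of_le (Nat.le_of_lt_succ (Finset.mem_range.mp i.2))
  · exact Nat.lt_succ_of_le (Nat.sub_le n i.1)

/-- Shannon entropy (base 2) of the random-BST shape distribution on `n` nodes,
which assigns probability `1/stProd t` to each tree `t` on `n` nodes. -/
noncomputable def shapeEntropy (n : ℕ) : ℝ :=
  - ∑ t ∈ treesOfSize n, (1 / (t.stProd : ℝ)) * Real.logb 2 (1 / (t.stProd : ℝ))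

/-- Expectation of `f` under the random-BST shape distribution on `n` nodes. -/
noncomputable def expCount (f : BinTree → ℕ) (n : ℕ) : ℝ :=
  ∑ t ∈ treesOfSize n, (1 / (t.stProd : ℝ)) * (f t : ℝ)

/-- The entropy recurrence: `H 0 = H 1 = 0`, `H n = lg n + (2/n) ∑_{i<n} H i`. -/
noncomputable def Hrec : ℕ → ℝ
  | 0 => 0
  | 1 => 0
  | n + 2 =>
      Real.logb 2 ((n + 2 : ℕ) : ℝ) +
        (2 / ((n + 2 : ℕ) : ℝ)) * ∑ i ∈ (Finset.range (n + 2)).attach, Hrec i.1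
termination_by n => n
decreasing_by exact Finset.mem_range.mp i.2

/-- `rmq_A(i,j)` (1-based): the position of the (first) minimum of `A[i..j]`. -/
def rmqFun (A : List ℕ) (i j : ℕ) : ℕ :=
  let s := (A.drop (i - 1)).take (j - i + 1)
  i + s.idxOf (List.foldl min (s.headD 0) s)

/-- The inorder rank of the LCA of the nodes with inorder ranks `i` and `j`. -/
def lcaInorder : BinTree → ℕ → ℕ → ℕ
  | .leaf, _, _ => 0
  | .node l r, i, j =>
      let m := l.size + 1
      if i < m ∧ j < m then lcaInorder l i j
      else if m < i ∧ m < j then m + lcaInorder r (i - m) (j - m)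
      else m

/-- The subtree rooted at the node reached from the root by the given
left(`false`)/right(`true`) directions, if it exists. -/
def subAt : BinTree → List Bool → Option BinTree
  | t, [] => some t
  | .leaf, _ :: _ => none
  | .node l _, false :: p => subAt l p
  | .node _ r, true :: p => subAt r p

/-- Subtree size of the node at a position (0 if there is no node there). -/
def stAt (t : BinTree) (pos : List Bool) : ℕ := ((subAt t pos).getD .leaf).size

/-- Left-subtree size of the node at a position. -/
def lsAt (t : BinTree) (pos : List Bool) : ℕ := ((subAt t pos).getD .leaf).leftSize

/-- `Pruned μ s`: `μ` is obtained from `s` by replacing some subtrees by `leaf`. -/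
inductive Pruned : BinTree → BinTree → Prop
  | leaf (t) : Pruned .leaf t
  | node {l' r' l r} : Pruned l' l → Pruned r' r → Pruned (.node l' r') (.node l r)

/-- `PrunedN k μ s`: `μ` is obtained from `s` by pruning exactly `k` (nonempty) subtrees. -/
inductive PrunedN : ℕ → BinTree → BinTree → Prop
  | refl (t) : PrunedN 0 t t
  | prune (l r) : PrunedN 1 .leaf (.node l r)
  | node {a b l' r' l r} : PrunedN a l' l → PrunedN b r' r → PrunedN (a + b) (.node l' r') (.node l r)

/-- `IsSubtree s t`: `s` is the subtree of `t` rooted at some node (or `t` itself). -/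
inductive IsSubtree : BinTree → BinTree → Prop
  | refl (t) : IsSubtree t t
  | left {s l r} : IsSubtree s l → IsSubtree s (.node l r)
  | right {s l r} : IsSubtree s r → IsSubtree s (.node l r)

/-- `∑_{v∈μ} lg st_s(v)`: sum over the nodes of `μ` of the log-subtree-sizes
taken in the host tree `s` (for `μ` pruned from `s`). -/
noncomputable def mixedEntropy : BinTree → BinTree → ℝ
  | .leaf, _ => 0
  | .node _ _, .leaf => 0
  | .node l' r', .node l r =>
      Real.logb 2 ((BinTree.node l r).size : ℝ) + mixedEntropy l' l + mixedEntropy r' r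

/-- 1-based preorder index of the node at a position (0 if no node there). -/
def preorderIdx : BinTree → List Bool → ℕ
  | _, [] => 1
  | .leaf, _ :: _ => 0
  | .node l _, false :: p => 1 + preorderIdx l p
  | .node l r, true :: p => 1 + l.size + preorderIdx r p

/-- 1-based inorder index of the node at a position. -/
def inorderIdx : BinTree → List Bool → ℕ
  | t, [] => t.leftSize + 1
  | .leaf, _ :: _ => 0
  | .node l _, false :: p => inorderIdx l p
  | .node l r, true :: p => l.size + 1 + inorderIdx r p

/-- Binary entropy function (base 2). -/
noncomputable def binH (x : ℝ) : ℝ := -x * Real.logb 2 x - (1 - x) * Real.logb 2 (1 - x)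

/-!
Since `P(node l r) = P(l) P(r) / (n + 1)` for a tree on `n + 1` nodes, the root rank of a random
BST is uniform and, given it, the two subtrees are independent random BSTs. The information
content `-lg P(t) = lg stProd t` splits accordingly as `lg (n + 1)` plus the information contents
of the two subtrees, and taking expectations (the weights of each size summing to `1`) gives the
recurrence.
-/

namespace BinTree

lemma stProd_pos : ∀ t : BinTree, 0 < t.stProd
  | leaf => Nat.one_pos
  | node l r => Nat.mul_pos (Nat.mul_pos (Nat.succ_pos _) l.stProd_pos) r.stProd_pos

noncomputable def bstProb (t : BinTree) : ℝ := 1 / (t.stProd : ℝ)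

lemma bstProb_node (l r : BinTree) :
    (node l r).bstProb = (l.size + r.size + 1 : ℝ)⁻¹ * (l.bstProb * r.bstProb) := by
  simp only [bstProb, stProd, size]
  push_cast
  rw [one_div, one_div, one_div, mul_inv, mul_inv, mul_assoc]

lemma logb_stProd_node (l r : BinTree) :
    logb 2 ((node l r).stProd : ℝ) =
      logb 2 (l.size + r.size + 1 : ℝ) + logb 2 (l.stProd : ℝ) + logb 2 (r.stProd : ℝ) := by
  have hl : (l.stProd : ℝ) ≠ 0 := by exact_mod_cast l.stProd_pos.ne'
  have hr : (r.stProd : ℝ) ≠ 0 := by exact_mod_cast r.stProd_pos.ne'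
  simp only [stProd, size]
  push_cast
  rw [logb_mul (mul_ne_zero (by positivity) hl) hr, logb_mul (by positivity) hl]

end BinTree

open BinTree

lemma size_eq_of_mem_treesOfSize {n : ℕ} {t : BinTree} (ht : t ∈ treesOfSize n) :
    t.size = n := by
  induction n using Nat.strong_induction_on generalizing t with
  | _ n ih =>
    cases n with
    | zero => simp_all [treesOfSize, size]
    | succ n =>
      rw [treesOfSize] at ht
      simp only [Finset.mem_biUnion, Finset.mem_image, Finset.mem_product,
        Finset.mem_attach, true_and] at ht
      obtain ⟨⟨i, hi⟩, ⟨l, r⟩, ⟨hl, hr⟩, rfl⟩ := ht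
      have hi := Finset.mem_range.mp hi
      simp only [size, ih i (by omega) hl, ih (n - i) (by omega) hr]
      omega

lemma sum_treesOfSize_succ {M : Type*} [AddCommMonoid M] (f : BinTree → M) (n : ℕ) :
    ∑ t ∈ treesOfSize (n + 1), f t =
      ∑ i ∈ Finset.range (n + 1), ∑ l ∈ treesOfSize i, ∑ r ∈ treesOfSize (n - i),
        f (node l r) := by
  rw [treesOfSize, Finset.sum_biUnion]
  · rw [← Finset.sum_attach (Finset.range (n + 1))]
    refine Finset.sum_congr rfl fun i _ => ?_
    rw [Finset.sum_image fun p _ q _ h => Prod.ext_iff.mpr (by simpa using h),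
      Finset.sum_product]
  · rintro ⟨i, _⟩ - ⟨j, _⟩ - hij
    refine Finset.disjoint_left.mpr fun t hti htj => hij (Subtype.ext ?_)
    simp only [Finset.mem_image, Finset.mem_product] at hti htj
    obtain ⟨⟨l, r⟩, ⟨hl, -⟩, rfl⟩ := hti
    obtain ⟨⟨l', r'⟩, ⟨hl', -⟩, h⟩ := htj
    cases h
    exact (size_eq_of_mem_treesOfSize hl).symm.trans (size_eq_of_mem_treesOfSize hl')

lemma sum_bstProb_mul_treesOfSize_succ (f : BinTree → ℝ) (n : ℕ) :
    ∑ t ∈ treesOfSize (n + 1), t.bstProb * f t =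
      (n + 1 : ℝ)⁻¹ * ∑ i ∈ Finset.range (n + 1), ∑ l ∈ treesOfSize i,
        ∑ r ∈ treesOfSize (n - i), l.bstProb * r.bstProb * f (node l r) := by
  rw [sum_treesOfSize_succ, Finset.mul_sum]
  refine Finset.sum_congr rfl fun i hi => ?_
  rw [Finset.mul_sum]
  refine Finset.sum_congr rfl fun l hl => ?_
  rw [Finset.mul_sum]
  refine Finset.sum_congr rfl fun r hr => ?_
  have hsize : (l.size + r.size + 1 : ℝ) = n + 1 := by
    have := Finset.mem_range.mp hi
    rw [size_eq_of_mem_treesOfSize hl, size_eq_of_mem_treesOfSize hr]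
    norm_cast
    omega
  rw [bstProb_node, hsize, mul_assoc]

lemma sum_bstProb_treesOfSize (n : ℕ) : ∑ t ∈ treesOfSize n, t.bstProb = 1 := by
  induction n using Nat.strong_induction_on with
  | _ n ih =>
    cases n with
    | zero => simp [treesOfSize, bstProb, stProd]
    | succ n =>
      have h := sum_bstProb_mul_treesOfSize_succ (fun _ => 1) n
      simp only [mul_one] at h
      have hinner : ∀ i ∈ Finset.range (n + 1),
          ∑ l ∈ treesOfSize i, ∑ r ∈ treesOfSize (n - i), l.bstProb * r.bstProb = 1 := by
        intro i hi
        have := Finset.mem_range.mp hi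
        rw [← Finset.sum_mul_sum, ih i (by omega), ih (n - i) (by omega), mul_one]
      rw [h, Finset.sum_congr rfl hinner, Finset.sum_const, Finset.card_range, nsmul_one]
      push_cast
      exact inv_mul_cancel₀ (by positivity)

lemma sum_sum_mul_mul_add_add_of_sum_eq_one {R ι κ : Type*} [CommSemiring R]
    {s : Finset ι} {u : Finset κ} {a : ι → R} {b : κ → R}
    (ha : ∑ i ∈ s, a i = 1) (hb : ∑ j ∈ u, b j = 1) (c : R) (g : ι → R) (h : κ → R) :
    ∑ i ∈ s, ∑ j ∈ u, a i * b j * (c + g i + h j) =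
      c + ∑ i ∈ s, a i * g i + ∑ j ∈ u, b j * h j := by
  have hsplit : ∀ i j, a i * b j * (c + g i + h j) =
      c * (a i * b j) + a i * g i * b j + a i * (b j * h j) := fun i j => by ring
  simp only [hsplit, Finset.sum_add_distrib, ← Finset.mul_sum, ← Finset.sum_mul, ha, hb]
  ring

lemma shapeEntropy_eq_sum_bstProb_mul_logb (n : ℕ) :
    shapeEntropy n = ∑ t ∈ treesOfSize n, t.bstProb * logb 2 (t.stProd : ℝ) := by
  rw [shapeEntropy, ← Finset.sum_neg_distrib]
  refine Finset.sum_congr rfl fun t _ => ?_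
  rw [bstProb, one_div, logb_inv]
  ring

lemma shapeEntropy_zero : shapeEntropy 0 = 0 := by
  simp [shapeEntropy_eq_sum_bstProb_mul_logb, treesOfSize, stProd]

lemma shapeEntropy_succ (n : ℕ) :
    shapeEntropy (n + 1) = logb 2 (n + 1 : ℝ) + (n + 1 : ℝ)⁻¹ *
      ∑ i ∈ Finset.range (n + 1), (shapeEntropy i + shapeEntropy (n - i)) := by
  have hinner : ∀ i ∈ Finset.range (n + 1),
      ∑ l ∈ treesOfSize i, ∑ r ∈ treesOfSize (n - i),
        l.bstProb * r.bstProb * logb 2 ((node l r).stProd : ℝ) =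
      logb 2 (n + 1 : ℝ) + (shapeEntropy i + shapeEntropy (n - i)) := by
    intro i hi
    have := Finset.mem_range.mp hi
    rw [shapeEntropy_eq_sum_bstProb_mul_logb, shapeEntropy_eq_sum_bstProb_mul_logb, ← add_assoc,
      ← sum_sum_mul_mul_add_add_of_sum_eq_one (sum_bstProb_treesOfSize i)
        (sum_bstProb_treesOfSize (n - i))]
    refine Finset.sum_congr rfl fun l hl => Finset.sum_congr rfl fun r hr => ?_
    have hsize : (l.size + r.size + 1 : ℝ) = n + 1 := by
      rw [size_eq_of_mem_treesOfSize hl, size_eq_of_mem_treesOfSize hr]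
      norm_cast
      omega
    rw [logb_stProd_node, hsize]
  rw [shapeEntropy_eq_sum_bstProb_mul_logb, sum_bstProb_mul_treesOfSize_succ,
    Finset.sum_congr rfl hinner, Finset.sum_add_distrib, Finset.sum_const, Finset.card_range,
    nsmul_eq_mul, mul_add, ← mul_assoc]
  push_cast
  rw [inv_mul_cancel₀ (by positivity), one_mul]

/-- The Shannon entropy `H_n` of the random-BST shape distribution satisfies
`H_0 = H_1 = 0` and `H_n = lg n + (1/n) ∑_{i=1}^n (H_{i-1} + H_{n-i})` for `n ≥ 2`. -/
theorem stmt2 :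
    shapeEntropy 0 = 0 ∧ shapeEntropy 1 = 0 ∧
    ∀ n : ℕ, 2 ≤ n →
      shapeEntropy n = Real.logb 2 (n : ℝ) +
        (1 / (n : ℝ)) * ∑ i ∈ Finset.Icc 1 n, (shapeEntropy (i - 1) + shapeEntropy (n - i)) := by
  refine ⟨shapeEntropy_zero, by simpa [shapeEntropy_zero] using shapeEntropy_succ 0, ?_⟩
  rintro n hn
  obtain ⟨m, rfl⟩ : ∃ m, n = m + 1 := ⟨n - 1, by omega⟩
  rw [shapeEntropy_succ, ← Finset.Ico_add_one_right_eq_Icc, Finset.sum_Ico_eq_sum_range,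
    add_tsub_cancel_right, one_div]
  push_cast
  congr 2
  refine Finset.sum_congr rfl fun k _ => ?_
  rw [add_tsub_cancel_left, add_comm 1 k, Nat.add_sub_add_right]
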